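/- Under the stated bilevel setting with constraints, assumptions (A1)–(A3), and the stated approximation scheme with μ_k → 0 and θ_k → 0: for every x̄ ∈ X and every sequence (x_k) in ℝ^m converging to x̄, lim sup_{k→∞} f_k*(x_k) ≤ f*(x̄). -/

import Mathlib

open Filter Topology

noncomputable section

/-- `ℝ^m` as a Euclidean space. -/
abbrev Evec (m : ℕ) := EuclideanSpace ℝ (Fin m)

/-- The lower-level value function `f*(x) = inf { f(x,y) : h(x,y) ≤ 0 }`,
taken in the extended reals (so `inf ∅ = +∞`). -/
def lowerValue {m n : ℕ} (f h : Evec m → Evec n → ℝ) (x : Evec m) : EReal :=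
  ⨅ y ∈ {y : Evec n | h x y ≤ 0}, ((f x y : ℝ) : EReal)

/-- The lower-level solution set `S(x) = argmin { f(x,y) : h(x,y) ≤ 0 }`. -/
def lowerArgmin {m n : ℕ} (f h : Evec m → Evec n → ℝ) (x : Evec m) : Set (Evec n) :=
  {y | h x y ≤ 0 ∧ ∀ y', h x y' ≤ 0 → f x y ≤ f x y'}

/-- The upper-level value function
`φ(x) = inf { F(x,y) : H(x,y) ≤ 0, h(x,y) ≤ 0, f(x,y) ≤ f*(x) }`,
taken in the extended reals (so `inf ∅ = +∞`). -/
def upperValue {m n : ℕ} (F f H h : Evec m → Evec n → ℝ) (x : Evec m) : EReal :=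
  ⨅ y ∈ {y : Evec n |
      H x y ≤ 0 ∧ h x y ≤ 0 ∧ ((f x y : ℝ) : EReal) ≤ lowerValue f h x},
    ((F x y : ℝ) : EReal)

/-- Canonical monotone extension of a nondecreasing function `P : ℝ → [0,+∞]`
to extended-real arguments (agrees with `P` on `ℝ` when `P` is nondecreasing and
continuous). -/
def erealExt (P : ℝ → EReal) : EReal → EReal := fun e =>
  haveI := Classical.dec (e = ⊥)
  if e = ⊥ then ⨅ r : ℝ, P r else sSup (P '' {r : ℝ | (r : EReal) ≤ e})

/-- The regularized barrier value function
`f_k*(x) = inf_y ( f(x,y) + P_{B,k}(h(x,y)) + (μ_k/2)‖y‖² )`. -/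
def fkstar {m n : ℕ} (f h : Evec m → Evec n → ℝ) (PB : ℕ → ℝ → EReal)
    (μ : ℕ → ℝ) (k : ℕ) (x : Evec m) : EReal :=
  ⨅ y : Evec n, (((f x y + μ k / 2 * ‖y‖ ^ 2 : ℝ) : EReal) + PB k (h x y))

/-- The approximate upper-level value function
`φ_k(x) = inf_y ( F(x,y) + P_{H,k}(H(x,y)) + P_{h,k}(h(x,y))
  + P_{f,k}( f(x,y) − f_k*(x) ) + (θ_k/2)‖y‖² )`. -/
def phik {m n : ℕ} (F f H h : Evec m → Evec n → ℝ)
    (PB PH Ph Pf : ℕ → ℝ → EReal) (μ θ : ℕ → ℝ) (k : ℕ) (x : Evec m) : EReal :=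
  ⨅ y : Evec n,
    (((F x y + θ k / 2 * ‖y‖ ^ 2 : ℝ) : EReal) + PH k (H x y) + Ph k (h x y)
      + erealExt (Pf k) (((f x y : ℝ) : EReal) - fkstar f h PB μ k x))

/-- The indicator function `δ_X` of a set `X`. -/
def deltaInd {m : ℕ} (X : Set (Evec m)) (x : Evec m) : EReal :=
  haveI := Classical.dec (x ∈ X)
  if x ∈ X then 0 else ⊤

/-- A family of auxiliary (penalty or modified barrier) functions `ℝ → [0,+∞]`:
each is nonnegative, nondecreasing and continuous; `P_k(ω) → 0` for every `ω ≤ 0`;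
and whenever `limsup_k P_k(ω_k) < +∞` for a real sequence `(ω_k)` one has
`limsup_k ω_k ≤ 0`. -/
def AuxFamily (P : ℕ → ℝ → EReal) : Prop :=
  (∀ k ω, 0 ≤ P k ω) ∧ (∀ k, Monotone (P k)) ∧ (∀ k, Continuous (P k)) ∧
    (∀ ω : ℝ, ω ≤ 0 → Tendsto (fun k => P k ω) atTop (𝓝 0)) ∧
    (∀ ω : ℕ → ℝ, limsup (fun k => P k (ω k)) atTop < ⊤ →
      limsup (fun k => ((ω k : ℝ) : EReal)) atTop ≤ 0)

/-- A family of barrier functions `ℝ → [0,+∞]`: each is nonnegative and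
nondecreasing, equal to `+∞` on `[0,∞)`, with `P_{B,k}(ω) → 0` for every `ω < 0`. -/
def BarrierFamily (PB : ℕ → ℝ → EReal) : Prop :=
  (∀ k ω, 0 ≤ PB k ω) ∧ (∀ k, Monotone (PB k)) ∧
    (∀ k, ∀ ω : ℝ, 0 ≤ ω → PB k ω = ⊤) ∧
    (∀ ω : ℝ, ω < 0 → Tendsto (fun k => PB k ω) atTop (𝓝 0))

/-- `g` is level-bounded in `y` locally uniformly in `x ∈ X`. -/
def LevelBoundedUnif {m n : ℕ} (g : Evec m → Evec n → ℝ) (X : Set (Evec m)) : Prop :=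
  ∀ x₀ ∈ X, ∀ c : ℝ, ∃ δ > (0 : ℝ), ∃ B : Set (Evec n), Bornology.IsBounded B ∧
    ∀ x ∈ X, ‖x - x₀‖ ≤ δ → {y | g x y ≤ c} ⊆ B

end

/-!
At a strictly feasible point `y` (`h(x̄,y) < 0`) the constraint stays below `h(x̄,y)/2` along
`x_k`, so the barrier term is eventually bounded by `P_{B,k}(h(x̄,y)/2) → 0` and
`lim sup f_k*(x_k) ≤ f(x̄,y)`. By (A3) the strictly feasible points are dense in the feasible
set, and continuity of `f(x̄,·)` carries the bound over to every feasible `y`, hence to `f*(x̄)`.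
-/

theorem le_biInf_of_le_on_neg_of_subset_closure {E : Type*} [TopologicalSpace E]
    {g c : E → ℝ} (hg : Continuous g) (hc : ∀ y, c y = 0 → y ∈ closure {y | c y < 0})
    {b : EReal} (hb : ∀ y, c y < 0 → b ≤ g y) :
    b ≤ ⨅ y ∈ {y | c y ≤ 0}, ((g y : ℝ) : EReal) := by
  have hclosed : IsClosed {y | b ≤ ((g y : ℝ) : EReal)} :=
    isClosed_le continuous_const (continuous_coe_real_ereal.comp hg)
  refine le_iInf₂ fun y hy => ?_
  rcases (show c y ≤ 0 from hy).lt_or_eq with hneg | hzero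
  · exact hb y hneg
  · exact closure_minimal hb hclosed (hc y hzero)

section

variable {m n : ℕ} {f h : Evec m → Evec n → ℝ} {PB : ℕ → ℝ → EReal} {μ : ℕ → ℝ}

theorem fkstar_le_of_le {k : ℕ} (hmono : Monotone (PB k)) {x : Evec m} {y : Evec n} {c : ℝ}
    (hc : h x y ≤ c) :
    fkstar f h PB μ k x ≤ ((f x y + μ k / 2 * ‖y‖ ^ 2 : ℝ) : EReal) + PB k c :=
  (iInf_le _ y).trans (add_le_add le_rfl (hmono hc))

theorem limsup_fkstar_le_of_neg
    (hfc : Continuous fun p : Evec m × Evec n => f p.1 p.2)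
    (hhc : Continuous fun p : Evec m × Evec n => h p.1 p.2)
    (hμ0 : Tendsto μ atTop (𝓝 0)) (hmono : ∀ k, Monotone (PB k))
    (hlim : ∀ ω : ℝ, ω < 0 → Tendsto (fun k => PB k ω) atTop (𝓝 0))
    {xb : Evec m} {xs : ℕ → Evec m} (hxs : Tendsto xs atTop (𝓝 xb))
    {y : Evec n} (hy : h xb y < 0) :
    limsup (fun k => fkstar f h PB μ k (xs k)) atTop ≤ ((f xb y : ℝ) : EReal) := by
  have hxy : Tendsto (fun k => (xs k, y)) atTop (𝓝 (xb, y)) :=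
    hxs.prodMk_nhds tendsto_const_nhds
  have hh_eventually : ∀ᶠ k in atTop, h (xs k) y ≤ h xb y / 2 :=
    ((hhc.tendsto (xb, y)).comp hxy).eventually_le_const (by linarith)
  have hreal : Tendsto (fun k => f (xs k) y + μ k / 2 * ‖y‖ ^ 2) atTop
      (𝓝 (f xb y + 0 / 2 * ‖y‖ ^ 2)) :=
    ((hfc.tendsto (xb, y)).comp hxy).add ((hμ0.div_const 2).mul_const _)
  rw [zero_div, zero_mul, add_zero] at hreal
  have hbound : Tendsto (fun k => ((f (xs k) y + μ k / 2 * ‖y‖ ^ 2 : ℝ) : EReal)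
      + PB k (h xb y / 2)) atTop (𝓝 (((f xb y : ℝ) : EReal) + 0)) :=
    (EReal.continuousAt_add (by simp) (by simp)).tendsto.comp
      (((continuous_coe_real_ereal.tendsto _).comp hreal).prodMk_nhds
        (hlim _ (by linarith)))
  rw [add_zero] at hbound
  calc limsup (fun k => fkstar f h PB μ k (xs k)) atTop
      ≤ limsup (fun k => ((f (xs k) y + μ k / 2 * ‖y‖ ^ 2 : ℝ) : EReal)
          + PB k (h xb y / 2)) atTop :=
        limsup_le_limsup (hh_eventually.mono fun k hk => fkstar_le_of_le (hmono k) hk)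
    _ = ((f xb y : ℝ) : EReal) := hbound.limsup_eq

end

theorem BVFSM_limsup_fkstar_le
    {m n : ℕ} (f h : Evec m → Evec n → ℝ) (X : Set (Evec m))
    (PB : ℕ → ℝ → EReal) (μ : ℕ → ℝ)
    (hfc : Continuous fun p : Evec m × Evec n => f p.1 p.2)
    (hhc : Continuous fun p : Evec m × Evec n => h p.1 p.2)
    (hA3 : ∀ x y, h x y = 0 → ∀ ε > (0 : ℝ), ∃ y', ‖y' - y‖ < ε ∧ h x y' < 0)
    (hμ0 : Tendsto μ atTop (𝓝 0))
    (hPB : BarrierFamily PB)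
    :
    ∀ xb ∈ X, ∀ xs : ℕ → Evec m, Tendsto xs atTop (𝓝 xb) →
      limsup (fun k => fkstar f h PB μ k (xs k)) atTop ≤ lowerValue f h xb := by
  intro xb _ xs hxs
  have hdense : ∀ y, h xb y = 0 → y ∈ closure {y | h xb y < 0} := fun y hy =>
    Metric.mem_closure_iff.2 fun ε hε =>
      let ⟨y', hy'ε, hy'neg⟩ := hA3 xb y hy ε hε
      ⟨y', hy'neg, by rwa [dist_eq_norm, norm_sub_rev]⟩
  exact le_biInf_of_le_on_neg_of_subset_closure (hfc.comp (Continuous.prodMk_right xb))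
    hdense fun y hy => limsup_fkstar_le_of_neg hfc hhc hμ0 hPB.2.1 hPB.2.2.2 hxs hy
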